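/- arXiv:2308.05817 — 5 statements merged into one kernel-verified Lean document; each statement's English description precedes it below -/
import Mathlib

section
/- Let j, ℓ be positive integers, let G be a graph and let U, V be disjoint subsets of its vertex set such that every u ∈ U has at least one neighbour in V, and every v ∈ V has at most j neighbours in U. If |U| ≥ 2jℓ, then there exist X ⊆ U and Y ⊆ V with |X| = |Y| = ℓ such that the bipartite graph between X and Y induced by G is a perfect matching (i.e., there is a bijection X → Y matching each x to a neighbour, and no other edges of G between X and Y). -/
/-!
Shrink `V` to an inclusion-minimal set `W` still dominating `U`. By minimality every `v ∈ W` has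
a private neighbour `u ∈ U`, adjacent to `v` and to no other vertex of `W`; these private
neighbours realise an induced matching between `U` and any part of `W`. Since each vertex of `W`
dominates at most `j` vertices of `U`, `|U| ≤ j |W|`, so `|W| ≥ ℓ`.
-/

namespace SimpleGraph

variable {α : Type*} (G : SimpleGraph α)

def IsPrivateNeighbor (W : Finset α) (v u : α) : Prop :=
  G.Adj u v ∧ ∀ w ∈ W, G.Adj u w → w = v

variable {G}

theorem IsPrivateNeighbor.mono {W W' : Finset α} {v u : α} (h : G.IsPrivateNeighbor W v u)
    (hW : W' ⊆ W) : G.IsPrivateNeighbor W' v u :=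
  ⟨h.1, fun w hw => h.2 w (hW hw)⟩

theorem exists_dominating_subset_privateNeighbor {U V : Finset α}
    (hU : ∀ u ∈ U, ∃ v ∈ V, G.Adj u v) :
    ∃ W ⊆ V, (∀ u ∈ U, ∃ v ∈ W, G.Adj u v) ∧ ∀ v ∈ W, ∃ u ∈ U, G.IsPrivateNeighbor W v u := by
  classical
  obtain ⟨W, hWV, hWmin⟩ :=
    exists_minimal_le_of_wellFoundedLT (fun W : Finset α => ∀ u ∈ U, ∃ v ∈ W, G.Adj u v) V hU
  refine ⟨W, hWV, hWmin.prop, fun v hv => ?_⟩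
  have hnot : ¬ ∀ u ∈ U, ∃ w ∈ W.erase v, G.Adj u w :=
    hWmin.not_prop_of_lt (Finset.erase_ssubset hv)
  push Not at hnot
  obtain ⟨u, hu, hnadj⟩ := hnot
  have huniq : ∀ w ∈ W, G.Adj u w → w = v := fun w hw hadj => by
    by_contra hne
    exact hnadj w (Finset.mem_erase.2 ⟨hne, hw⟩) hadj
  obtain ⟨w, hw, hadj⟩ := hWmin.prop u hu
  exact ⟨u, hu, huniq w hw hadj ▸ hadj, huniq⟩

theorem card_le_mul_card_of_dominating [DecidableEq α] [DecidableRel G.Adj] {U W : Finset α}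
    {j : ℕ} (hW : ∀ u ∈ U, ∃ v ∈ W, G.Adj u v)
    (hdeg : ∀ v ∈ W, (U.filter (G.Adj v)).card ≤ j) :
    U.card ≤ j * W.card := by
  have hcover : U ⊆ W.biUnion (fun v => U.filter (G.Adj v)) := fun u hu => by
    obtain ⟨v, hv, hadj⟩ := hW u hu
    exact Finset.mem_biUnion.2 ⟨v, hv, Finset.mem_filter.2 ⟨hu, hadj.symm⟩⟩
  calc U.card ≤ (W.biUnion fun v => U.filter (G.Adj v)).card := Finset.card_le_card hcover
    _ ≤ W.card * j := Finset.card_biUnion_le_card_mul _ _ _ hdeg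
    _ = j * W.card := Nat.mul_comm _ _

theorem exists_inducedMatching_of_privateNeighbor [DecidableEq α] {U Y : Finset α}
    (hY : ∀ v ∈ Y, ∃ u ∈ U, G.IsPrivateNeighbor Y v u) :
    ∃ (X : Finset α) (f : α → α), X ⊆ U ∧ X.card = Y.card ∧ Set.InjOn f X ∧ Y = X.image f ∧
      (∀ x ∈ X, G.Adj x (f x)) ∧ (∀ x ∈ X, ∀ y ∈ Y, G.Adj x y → y = f x) := by
  obtain rfl | ⟨v₀, -⟩ := Y.eq_empty_or_nonempty
  · exact ⟨∅, id, by simp⟩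
  have : Nonempty α := ⟨v₀⟩
  choose! g hgU hg using hY
  have hginj : Set.InjOn g Y := fun v hv w hw hvw =>
    (hg w hw).2 v hv (hvw ▸ (hg v hv).1)
  have hleft : Set.LeftInvOn (Function.invFunOn g Y) g Y := hginj.leftInvOn_invFunOn
  refine ⟨Y.image g, Function.invFunOn g Y, ?_, Finset.card_image_of_injOn hginj, ?_, ?_, ?_, ?_⟩
  · exact Finset.image_subset_iff.2 hgU
  · simpa using Function.invFunOn_injOn_image g (Y : Set α)
  · apply Finset.coe_injective
    simp [hleft.image_image]
  · simp only [Finset.mem_image, forall_exists_index, and_imp]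
    rintro _ v hv rfl
    rw [hleft hv]
    exact (hg v hv).1
  · simp only [Finset.mem_image, forall_exists_index, and_imp]
    rintro _ v hv rfl y hy hadj
    rw [hleft hv]
    exact (hg v hv).2 y hy hadj

end SimpleGraph

theorem stmt_4_general {α : Type*} [DecidableEq α] (j ℓ : ℕ) (hj : 1 ≤ j)
    (G : SimpleGraph α) (U V : Finset α)
    (hU : ∀ u ∈ U, ∃ v ∈ V, G.Adj u v)
    (hV : ∀ v ∈ V, ({u ∈ (U : Set α) | G.Adj v u}).ncard ≤ j)
    (hcard : 2 * j * ℓ ≤ U.card) :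
    ∃ (X Y : Finset α) (f : α → α), X ⊆ U ∧ Y ⊆ V ∧ X.card = ℓ ∧ Y.card = ℓ ∧
      Set.InjOn f X ∧ Y = X.image f ∧
      (∀ x ∈ X, G.Adj x (f x)) ∧
      (∀ x ∈ X, ∀ y ∈ Y, G.Adj x y → y = f x) := by
  classical
  obtain ⟨W, hWV, hWdom, hWpriv⟩ :=
    SimpleGraph.exists_dominating_subset_privateNeighbor hU
  have hdeg : ∀ v ∈ W, (U.filter (G.Adj v)).card ≤ j := fun v hv => by
    simpa [← Set.ncard_coe_finset] using hV v (hWV hv)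
  have hℓW : ℓ ≤ W.card := by
    refine Nat.le_of_mul_le_mul_left ?_ hj
    calc j * ℓ ≤ 2 * j * ℓ := Nat.mul_le_mul_right ℓ (by omega)
      _ ≤ U.card := hcard
      _ ≤ j * W.card := SimpleGraph.card_le_mul_card_of_dominating hWdom hdeg
  obtain ⟨Y, hYW, rfl⟩ := Finset.exists_subset_card_eq hℓW
  obtain ⟨X, f, hXU, hXcard, hf, hY, hadj, huniq⟩ :=
    SimpleGraph.exists_inducedMatching_of_privateNeighbor fun v hv =>
      (hWpriv v (hYW hv)).imp fun _ => And.imp_right (·.mono hYW)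
  exact ⟨X, Y, f, hXU, hYW.trans hWV, hXcard, rfl, hf, hY, hadj, huniq⟩

/-- Lemma 5.4 (deggeq): if every `u ∈ U` has a neighbour in `V`, every `v ∈ V` has at most `j`
neighbours in `U`, and `|U| ≥ 2jℓ`, then there are `X ⊆ U`, `Y ⊆ V` of size `ℓ` such that the
bipartite graph of `G` between `X` and `Y` is a perfect matching (an induced matching `ℓ P₂`). -/
theorem stmt_4 {α : Type*} [DecidableEq α] (j ℓ : ℕ) (hj : 1 ≤ j) (hℓ : 1 ≤ ℓ)
    (G : SimpleGraph α) (U V : Finset α) (hUV : Disjoint U V)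
    (hU : ∀ u ∈ U, ∃ v ∈ V, G.Adj u v)
    (hV : ∀ v ∈ V, ({u ∈ (U : Set α) | G.Adj v u}).ncard ≤ j)
    (hcard : 2 * j * ℓ ≤ U.card) :
    ∃ (X Y : Finset α) (f : α → α), X ⊆ U ∧ Y ⊆ V ∧ X.card = ℓ ∧ Y.card = ℓ ∧
      Set.InjOn f X ∧ Y = X.image f ∧
      (∀ x ∈ X, G.Adj x (f x)) ∧
      (∀ x ∈ X, ∀ y ∈ Y, G.Adj x y → y = f x) :=
  stmt_4_general j ℓ hj G U V hU hV hcard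
end

section
/- Fix positive integers m, n, k and set f(n,k) = 2^(n+k) and g(n,k) = m·k^n. Let G be a graph and U, V disjoint vertex subsets with U an independent set, |U| ≥ f(n,k), and such that for every u ∈ U the induced subgraph of G on N(u) ∩ V contains an independent set of size g(n,k). Then either (1) there exist X ⊆ U and Y ⊆ V with |X| = |Y| = k such that the bipartite graph between X and Y in G is a perfect matching with no other edges (an induced matching of size k), or (2) there exist independent sets X ⊆ U and Y ⊆ V with |X| = n, |Y| = m such that every vertex of X is adjacent to every vertex of Y (an induced K_{n,m}). -/
/-!
Induction on `n + k`, the cases `n = 0` and `k = 0` being trivial. For `(n+1, k+1)`, pick `u ∈ U`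
with its independent neighbour set `I u` of size `m (k+1)^(n+1) = (k+1) B`, where `B = m (k+1)^n`,
and call `w ∈ U \ {u}` heavy if `w` sees at least `B` vertices of `I u`, or `u` sees at least `B`
vertices of `I w`. One of the classes has `2^(n+k+1)` elements. Every heavy `w` has `B` independent
neighbours inside `N(u) ∩ V`, so an induced `K_{n,m}` found there extends by `u` to an induced
`K_{n+1,m}`. Every light `w` has at least `m k^(n+1)` independent neighbours outside `N(u)`; an
induced `k`-matching `X` found there extends by an edge `uv`, since the `k` vertices of `X` together
see at most `k B < |I u|` vertices of `I u`, leaving some `v ∈ I u` with no neighbour in `X`.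
-/

open Finset

theorem Finset.le_card_filter_or_le_card_filter_not {β : Type*} (s : Finset β) (p : β → Prop)
    [DecidablePred p] {t : ℕ} (h : 2 * t ≤ #s + 1) :
    t ≤ #(s.filter p) ∨ t ≤ #(s.filter fun a => ¬ p a) := by
  have := card_filter_add_card_filter_not (s := s) p
  omega

namespace SimpleGraph

variable {α : Type*} (G : SimpleGraph α)

def IsIndepFinset (s : Finset α) : Prop := ∀ x ∈ s, ∀ y ∈ s, ¬ G.Adj x y

def IsIndepNeighbourSet (W : Finset α) (w : α) (I : Finset α) : Prop :=
  I ⊆ W ∧ (∀ x ∈ I, G.Adj w x) ∧ G.IsIndepFinset I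

def HasIndepNeighbours (W : Finset α) (s : ℕ) (w : α) : Prop :=
  ∃ I : Finset α, I ⊆ W ∧ #I = s ∧ (∀ x ∈ I, G.Adj w x) ∧ G.IsIndepFinset I

def HasInducedBiclique (U V : Finset α) (n m : ℕ) : Prop :=
  ∃ X Y : Finset α, X ⊆ U ∧ Y ⊆ V ∧ #X = n ∧ #Y = m ∧
    G.IsIndepFinset X ∧ G.IsIndepFinset Y ∧ ∀ x ∈ X, ∀ y ∈ Y, G.Adj x y

variable {G}

theorem IsIndepFinset.mono {s t : Finset α} (h : G.IsIndepFinset t) (hst : s ⊆ t) :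
    G.IsIndepFinset s :=
  fun x hx y hy => h x (hst hx) y (hst hy)

theorem IsIndepNeighbourSet.filter {W I : Finset α} {w : α} (h : G.IsIndepNeighbourSet W w I)
    (p : α → Prop) [DecidablePred p] : G.IsIndepNeighbourSet (W.filter p) w (I.filter p) :=
  ⟨filter_subset_filter p h.1, fun x hx => h.2.1 x (mem_filter.1 hx).1,
    h.2.2.mono (filter_subset p I)⟩

theorem IsIndepNeighbourSet.filter_adj [DecidableRel G.Adj] {W I : Finset α} {u : α}
    (h : G.IsIndepNeighbourSet W u I) (w : α) :
    G.IsIndepNeighbourSet (W.filter (G.Adj u)) w (I.filter (G.Adj w)) :=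
  ⟨fun x hx => mem_filter.2 ⟨h.1 (mem_filter.1 hx).1, h.2.1 x (mem_filter.1 hx).1⟩,
    fun _ hx => (mem_filter.1 hx).2, h.2.2.mono (filter_subset _ I)⟩

theorem IsIndepNeighbourSet.hasIndepNeighbours {W I : Finset α} {w : α} {s : ℕ}
    (h : G.IsIndepNeighbourSet W w I) (hs : s ≤ #I) : G.HasIndepNeighbours W s w := by
  obtain ⟨J, hJI, hJ⟩ := exists_subset_card_eq hs
  exact ⟨J, hJI.trans h.1, hJ, fun x hx => h.2.1 x (hJI hx), h.2.2.mono hJI⟩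

theorem IsIndepNeighbourSet.hasIndepNeighbours_filter_adj [DecidableRel G.Adj]
    {V I J : Finset α} {u w : α} {s : ℕ} (hI : G.IsIndepNeighbourSet V u I)
    (hJ : G.IsIndepNeighbourSet V w J)
    (h : s ≤ #(I.filter (G.Adj w)) ∨ s ≤ #(J.filter (G.Adj u))) :
    G.HasIndepNeighbours (V.filter (G.Adj u)) s w :=
  h.elim (hI.filter_adj w).hasIndepNeighbours (hJ.filter (G.Adj u)).hasIndepNeighbours

theorem IsIndepNeighbourSet.hasIndepNeighbours_filter_not_adj [DecidableRel G.Adj]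
    {V J : Finset α} {u w : α} {s : ℕ} (hJ : G.IsIndepNeighbourSet V w J)
    (h : #(J.filter (G.Adj u)) + s ≤ #J) :
    G.HasIndepNeighbours (V.filter (¬ G.Adj u ·)) s w := by
  refine (hJ.filter (¬ G.Adj u ·)).hasIndepNeighbours ?_
  have := card_filter_add_card_filter_not (s := J) (G.Adj u)
  omega

theorem HasInducedBiclique.mono {U U' V V' : Finset α} {n m : ℕ}
    (h : G.HasInducedBiclique U V n m) (hU : U ⊆ U') (hV : V ⊆ V') :
    G.HasInducedBiclique U' V' n m :=
  let ⟨X, Y, hX, hY, hXY⟩ := h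
  ⟨X, Y, hX.trans hU, hY.trans hV, hXY⟩

theorem HasIndepNeighbours.hasInducedBiclique_zero {U V : Finset α} {m : ℕ} {u : α}
    (h : G.HasIndepNeighbours V m u) : G.HasInducedBiclique U V 0 m :=
  let ⟨I, hIV, hI, _, hIind⟩ := h
  ⟨∅, I, empty_subset U, hIV, card_empty, hI, by simp [IsIndepFinset], hIind, by simp⟩

variable [DecidableEq α]

theorem HasInducedBiclique.insert_left {U V : Finset α} {n m : ℕ} {u : α}
    (h : G.HasInducedBiclique U V n m) (hu : u ∉ U) (hindep : G.IsIndepFinset (insert u U))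
    (hV : ∀ y ∈ V, G.Adj u y) : G.HasInducedBiclique (insert u U) V (n + 1) m := by
  obtain ⟨X, Y, hX, hY, rfl, hYm, -, hYind, hXY⟩ := h
  refine ⟨insert u X, Y, insert_subset_insert u hX, hY, card_insert_of_notMem (hu <| hX ·), hYm,
    hindep.mono (insert_subset_insert u hX), hYind, ?_⟩
  simpa using ⟨fun y hy => hV y (hY hy), hXY⟩

variable (G) in
def IsInducedMatching (X Y : Finset α) (f : α → α) : Prop :=
  Set.InjOn f X ∧ Y = X.image f ∧ (∀ x ∈ X, G.Adj x (f x)) ∧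
    ∀ x ∈ X, ∀ y ∈ Y, G.Adj x y → y = f x

variable (G) in
def HasInducedMatching (U V : Finset α) (k : ℕ) : Prop :=
  ∃ (X Y : Finset α) (f : α → α), X ⊆ U ∧ Y ⊆ V ∧ #X = k ∧ #Y = k ∧ G.IsInducedMatching X Y f

theorem hasInducedMatching_zero (U V : Finset α) : G.HasInducedMatching U V 0 :=
  ⟨∅, ∅, id, by simp [IsInducedMatching]⟩

theorem HasInducedMatching.mono {U U' V V' : Finset α} {k : ℕ} (h : G.HasInducedMatching U V k)
    (hU : U ⊆ U') (hV : V ⊆ V') : G.HasInducedMatching U' V' k :=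
  let ⟨X, Y, f, hX, hY, hXY⟩ := h
  ⟨X, Y, f, hX.trans hU, hY.trans hV, hXY⟩

theorem IsInducedMatching.insert {X Y : Finset α} {f : α → α} {u v : α}
    (h : G.IsInducedMatching X Y f) (hu : u ∉ X) (hv : v ∉ Y) (huv : G.Adj u v)
    (hXv : ∀ x ∈ X, ¬ G.Adj x v) (hYu : ∀ y ∈ Y, ¬ G.Adj u y) :
    G.IsInducedMatching (insert u X) (insert v Y) (Function.update f u v) := by
  obtain ⟨hinj, rfl, hadj, hind⟩ := h
  have hupd : ∀ x ∈ X, Function.update f u v x = f x :=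
    fun x hx => Function.update_of_ne (ne_of_mem_of_not_mem hx hu) _ _
  refine ⟨?_, ?_, ?_, ?_⟩
  · rw [coe_insert, Set.injOn_insert (by simpa using hu)]
    refine ⟨hinj.congr fun x hx => (hupd x hx).symm, ?_⟩
    rintro ⟨x, hx, hxv⟩
    rw [Function.update_self, hupd x hx] at hxv
    exact hv (hxv ▸ mem_image_of_mem f hx)
  · rw [image_insert, Function.update_self, image_congr hupd]
  · simpa [huv] using fun x hx => hupd x hx ▸ hadj x hx
  · intro x hx y hy hxy
    rw [mem_insert] at hx hy
    rcases hx with rfl | hx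
    · rcases hy with rfl | hy
      · simp
      · exact absurd hxy (hYu y hy)
    · rw [hupd x hx]
      rcases hy with rfl | hy
      · exact absurd hxy (hXv x hx)
      · exact hind x hx y hy hxy

theorem exists_mem_forall_not_adj [DecidableRel G.Adj] {X I : Finset α} {b : ℕ}
    (hX : ∀ x ∈ X, #(I.filter (G.Adj x)) ≤ b) (hI : #X * b < #I) :
    ∃ v ∈ I, ∀ x ∈ X, ¬ G.Adj x v := by
  by_contra! h
  have hcover : I ⊆ X.biUnion fun x => I.filter (G.Adj x) := fun v hv =>
    let ⟨x, hx, hxv⟩ := h v hv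
    mem_biUnion.2 ⟨x, hx, mem_filter.2 ⟨hv, hxv⟩⟩
  exact hI.not_ge ((card_le_card hcover).trans (card_biUnion_le_card_mul _ _ _ hX))

theorem HasInducedMatching.insert_union [DecidableRel G.Adj] {U V I : Finset α} {u : α} {k b : ℕ}
    (h : G.HasInducedMatching U V k) (hu : u ∉ U) (hV : ∀ y ∈ V, ¬ G.Adj u y)
    (hI : ∀ v ∈ I, G.Adj u v) (hUI : ∀ x ∈ U, #(I.filter (G.Adj x)) ≤ b) (hb : k * b < #I) :
    G.HasInducedMatching (insert u U) (V ∪ I) (k + 1) := by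
  obtain ⟨X, Y, f, hX, hY, rfl, hYk, hf⟩ := h
  obtain ⟨v, hvI, hXv⟩ := exists_mem_forall_not_adj (fun x hx => hUI x (hX hx)) hb
  have hvY : v ∉ Y := fun hv => hV v (hY hv) (hI v hvI)
  refine ⟨insert u X, insert v Y, Function.update f u v, insert_subset_insert u hX,
    insert_subset (mem_union_right V hvI) (hY.trans subset_union_left),
    card_insert_of_notMem (hu <| hX ·), by rw [card_insert_of_notMem hvY, hYk],
    hf.insert (hu <| hX ·) hvY (hI v hvI) hXv fun y hy => hV y (hY hy)⟩

theorem hasInducedMatching_or_hasInducedBiclique_of_neighbourhood [DecidableRel G.Adj]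
    {U V E : Finset α} {u : α} {n m k : ℕ} (hu : u ∈ U) (hU : G.IsIndepFinset U)
    (hEU : E ⊆ U.erase u)
    (h : G.HasInducedMatching E (V.filter (G.Adj u)) k ∨
      G.HasInducedBiclique E (V.filter (G.Adj u)) n m) :
    G.HasInducedMatching U V k ∨ G.HasInducedBiclique U V (n + 1) m := by
  have huE : insert u E ⊆ U := insert_subset hu (hEU.trans (erase_subset u U))
  refine h.imp (·.mono (hEU.trans (erase_subset u U)) (filter_subset _ V)) fun h => ?_
  exact (h.insert_left (fun h => by simpa using hEU h) (hU.mono huE)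
    fun y hy => (mem_filter.1 hy).2).mono huE (filter_subset _ V)

theorem hasInducedMatching_or_hasInducedBiclique_of_nonneighbourhood [DecidableRel G.Adj]
    {U V D I : Finset α} {u : α} {n m k b : ℕ} (hu : u ∈ U) (hD : D ⊆ U.erase u)
    (hI : G.IsIndepNeighbourSet V u I) (hDI : ∀ x ∈ D, #(I.filter (G.Adj x)) ≤ b)
    (hb : k * b < #I)
    (h : G.HasInducedMatching D (V.filter (¬ G.Adj u ·)) k ∨
      G.HasInducedBiclique D (V.filter (¬ G.Adj u ·)) n m) :
    G.HasInducedMatching U V (k + 1) ∨ G.HasInducedBiclique U V n m := by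
  refine h.imp (fun h => ?_) (·.mono (hD.trans (erase_subset u U)) (filter_subset _ V))
  exact (h.insert_union (fun h => by simpa using hD h) (fun y hy => (mem_filter.1 hy).2) hI.2.1
    hDI hb).mono (insert_subset hu (hD.trans (erase_subset u U)))
    (union_subset (filter_subset _ V) hI.1)

theorem hasInducedMatching_or_hasInducedBiclique (m : ℕ) :
    ∀ (n k : ℕ) (U V : Finset α), G.IsIndepFinset U → 2 ^ (n + k) ≤ #U →
      (∀ u ∈ U, G.HasIndepNeighbours V (m * k ^ n) u) →
      G.HasInducedMatching U V k ∨ G.HasInducedBiclique U V n m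
  | 0, k, U, V, _, hcard, hnbr => by
    obtain ⟨u, hu⟩ : U.Nonempty := card_pos.1 (lt_of_lt_of_le (by positivity) hcard)
    have hu' : G.HasIndepNeighbours V m u := by simpa using hnbr u hu
    exact .inr hu'.hasInducedBiclique_zero
  | n + 1, 0, U, V, _, _, _ => .inl (hasInducedMatching_zero U V)
  | n + 1, k + 1, U, V, hU, hcard, hnbr => by
    classical
    choose! I hIV hIcard hIadj hIind using hnbr
    have hI : ∀ w ∈ U, G.IsIndepNeighbourSet V w (I w) :=
      fun w hw => ⟨hIV w hw, hIadj w hw, hIind w hw⟩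
    obtain ⟨u, hu⟩ : U.Nonempty := card_pos.1 (lt_of_lt_of_le (by positivity) hcard)
    set B := m * (k + 1) ^ n
    have hIcard_B : ∀ w ∈ U, #(I w) = k * B + B := fun w hw => by rw [hIcard w hw]; ring
    have hUu : U.erase u ⊆ U := erase_subset u U
    let heavy w := B ≤ #((I u).filter (G.Adj w)) ∨ B ≤ #((I w).filter (G.Adj u))
    have hsplit : 2 * 2 ^ (n + k + 1) ≤ #(U.erase u) + 1 := by
      rw [card_erase_add_one hu, ← pow_succ']
      convert hcard using 2
      ring
    rcases (U.erase u).le_card_filter_or_le_card_filter_not heavy hsplit with hE | hD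
    · have hnbrE : ∀ w ∈ (U.erase u).filter heavy,
          G.HasIndepNeighbours (V.filter (G.Adj u)) (m * (k + 1) ^ n) w := fun w hw =>
        (hI u hu).hasIndepNeighbours_filter_adj (hI w (hUu (filter_subset _ _ hw)))
          (mem_filter.1 hw).2
      exact hasInducedMatching_or_hasInducedBiclique_of_neighbourhood hu hU (filter_subset _ _)
        (hasInducedMatching_or_hasInducedBiclique m n (k + 1) _ _
          (hU.mono ((filter_subset _ _).trans hUu)) (by rwa [add_assoc] at hE) hnbrE)
    · set D := (U.erase u).filter fun w => ¬ heavy w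
      have hlight : ∀ w ∈ D, #((I u).filter (G.Adj w)) < B ∧ #((I w).filter (G.Adj u)) < B :=
        fun w hw => by simpa only [heavy, not_or, not_le] using (mem_filter.1 hw).2
      have hB : 0 < B := by
        obtain ⟨w, hw⟩ : D.Nonempty := card_pos.1 (lt_of_lt_of_le (by positivity) hD)
        exact Nat.zero_lt_of_lt (hlight w hw).1
      have hmk : m * k ^ (n + 1) ≤ k * B :=
        calc m * k ^ (n + 1) = k * (m * k ^ n) := by ring
        _ ≤ k * (m * (k + 1) ^ n) := by gcongr; omega
      have hnbrD : ∀ w ∈ D,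
          G.HasIndepNeighbours (V.filter (¬ G.Adj u ·)) (m * k ^ (n + 1)) w := fun w hw =>
        (hI w (hUu (filter_subset _ _ hw))).hasIndepNeighbours_filter_not_adj (by
          rw [hIcard_B w (hUu (filter_subset _ _ hw))]; linarith [(hlight w hw).2])
      exact hasInducedMatching_or_hasInducedBiclique_of_nonneighbourhood hu (filter_subset _ _)
        (hI u hu) (fun x hx => (hlight x hx).1.le) (by rw [hIcard_B u hu]; omega)
        (hasInducedMatching_or_hasInducedBiclique m (n + 1) k D _
          (hU.mono ((filter_subset _ _).trans hUu)) (by rwa [add_right_comm] at hD) hnbrD)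
  termination_by n k => n + k

end SimpleGraph

theorem stmt_5_general {α : Type*} [DecidableEq α] (m n k : ℕ)
    (G : SimpleGraph α) (U V : Finset α)
    (hUindep : ∀ x ∈ U, ∀ y ∈ U, ¬ G.Adj x y)
    (hUcard : 2 ^ (n + k) ≤ U.card)
    (hnbr : ∀ u ∈ U, ∃ I : Finset α, I ⊆ V ∧ I.card = m * k ^ n ∧
      (∀ x ∈ I, G.Adj u x) ∧ (∀ x ∈ I, ∀ y ∈ I, ¬ G.Adj x y)) :
    (∃ (X Y : Finset α) (f : α → α), X ⊆ U ∧ Y ⊆ V ∧ X.card = k ∧ Y.card = k ∧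
      Set.InjOn f X ∧ Y = X.image f ∧ (∀ x ∈ X, G.Adj x (f x)) ∧
      (∀ x ∈ X, ∀ y ∈ Y, G.Adj x y → y = f x)) ∨
    (∃ X Y : Finset α, X ⊆ U ∧ Y ⊆ V ∧ X.card = n ∧ Y.card = m ∧
      (∀ x ∈ X, ∀ y ∈ X, ¬ G.Adj x y) ∧ (∀ x ∈ Y, ∀ y ∈ Y, ¬ G.Adj x y) ∧
      (∀ x ∈ X, ∀ y ∈ Y, G.Adj x y)) :=
  SimpleGraph.hasInducedMatching_or_hasInducedBiclique m n k U V hUindep hUcard hnbr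

/-- Lemma 5.5 (fin): with `f(n,k) = 2^(n+k)` and `g(n,k) = m * k^n`, if `U` is an independent
set disjoint from `V` with `|U| ≥ f(n,k)` and every `u ∈ U` has an independent set of size
`g(n,k)` inside its neighbourhood in `V`, then either there is an induced matching of size `k`
between subsets of `U` and `V`, or an induced `K_{n,m}` with parts in `U` and `V`. -/
theorem stmt_5 {α : Type*} [DecidableEq α] (m n k : ℕ) (hm : 1 ≤ m) (hn : 1 ≤ n) (hk : 1 ≤ k)
    (G : SimpleGraph α) (U V : Finset α) (hUV : Disjoint U V)
    (hUindep : ∀ x ∈ U, ∀ y ∈ U, ¬ G.Adj x y)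
    (hUcard : 2 ^ (n + k) ≤ U.card)
    (hnbr : ∀ u ∈ U, ∃ I : Finset α, I ⊆ V ∧ I.card = m * k ^ n ∧
      (∀ x ∈ I, G.Adj u x) ∧ (∀ x ∈ I, ∀ y ∈ I, ¬ G.Adj x y)) :
    (∃ (X Y : Finset α) (f : α → α), X ⊆ U ∧ Y ⊆ V ∧ X.card = k ∧ Y.card = k ∧
      Set.InjOn f X ∧ Y = X.image f ∧ (∀ x ∈ X, G.Adj x (f x)) ∧
      (∀ x ∈ X, ∀ y ∈ Y, G.Adj x y → y = f x)) ∨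
    (∃ X Y : Finset α, X ⊆ U ∧ Y ⊆ V ∧ X.card = n ∧ Y.card = m ∧
      (∀ x ∈ X, ∀ y ∈ X, ¬ G.Adj x y) ∧ (∀ x ∈ Y, ∀ y ∈ Y, ¬ G.Adj x y) ∧
      (∀ x ∈ X, ∀ y ∈ Y, G.Adj x y)) :=
  stmt_5_general m n k G U V hUindep hUcard hnbr
end

section
/- Let G be a graph with a tree decomposition (T, {X_t}) of width at most k. Define, for each node t of T, the set B_t of edges of G incident with some vertex of X_t. Then (T, {B_t}) is a tree decomposition of the line graph L(G), and for each node t, the maximum independent set of L(G) restricted to B_t has size at most |X_t| ≤ k+1. In particular, the tree-independence number of L(G) is at most k+1. -/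
open SimpleGraph

/-- `(T, X)` is a tree decomposition of the graph `G`. -/
def IsTreeDecomp {V ι : Type*} (G : SimpleGraph V) (T : SimpleGraph ι) (X : ι → Set V) : Prop :=
  T.IsTree ∧
  (∀ v : V, ∃ t, v ∈ X t) ∧
  (∀ u v : V, G.Adj u v → ∃ t, u ∈ X t ∧ v ∈ X t) ∧
  (∀ v : V, (T.induce {t | v ∈ X t}).Connected)

/-! The bags of the edge `uv` in the line-graph decomposition are those of `u` together with
those of `v`; these two subtrees meet because some bag contains the edge `uv`. A matching all of
whose edges meet `S` has at most `|S|` edges, since each vertex of `S` lies on at most one of them. -/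

namespace SimpleGraph

variable {V ι : Type*} {G : SimpleGraph V}

lemma card_le_card_of_forall_incident {S : Finset V} {I : Finset G.edgeSet}
    (hinc : ∀ e ∈ I, ∃ v ∈ S, v ∈ (e : Sym2 V))
    (hind : ∀ e ∈ I, ∀ f ∈ I, ¬ G.lineGraph.Adj e f) : I.card ≤ S.card :=
  Finset.card_le_card_of_forall_subsingleton (fun (e : G.edgeSet) v => v ∈ (e : Sym2 V)) hinc
    fun v _ e he f hf => by
      by_contra hne
      exact hind e he.1 f hf.1 (lineGraph_adj_iff_exists.2 ⟨hne, v, he.2, hf.2⟩)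

lemma setOf_mem_incident_eq_union (X : ι → Set V) {u v : V} (huv : G.Adj u v) :
    {t | (⟨s(u, v), huv⟩ : G.edgeSet) ∈ {e : G.edgeSet | ∃ w ∈ X t, w ∈ (e : Sym2 V)}} =
      {t | u ∈ X t} ∪ {t | v ∈ X t} := by
  ext t
  simp only [Set.mem_ofPred_eq, Set.mem_union, Sym2.mem_iff]
  constructor
  · rintro ⟨w, hw, rfl | rfl⟩
    exacts [Or.inl hw, Or.inr hw]
  · rintro (hu | hv)
    exacts [⟨u, hu, Or.inl rfl⟩, ⟨v, hv, Or.inr rfl⟩]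

lemma IsTreeDecomp.lineGraph {T : SimpleGraph ι} {X : ι → Set V} (hdec : IsTreeDecomp G T X) :
    IsTreeDecomp G.lineGraph T (fun t => {e : G.edgeSet | ∃ v ∈ X t, v ∈ (e : Sym2 V)}) := by
  obtain ⟨htree, hcover, hedge, hconn⟩ := hdec
  refine ⟨htree, ?_, ?_, ?_⟩
  · rintro ⟨e, he⟩
    induction e using Sym2.ind with
    | _ u v =>
      obtain ⟨t, hu, -⟩ := hedge u v he
      exact ⟨t, u, hu, Sym2.mem_mk_left u v⟩
  · intro e f hef
    obtain ⟨-, v, hve, hvf⟩ := lineGraph_adj_iff_exists.1 hef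
    obtain ⟨t, hvt⟩ := hcover v
    exact ⟨t, ⟨v, hvt, hve⟩, ⟨v, hvt, hvf⟩⟩
  · rintro ⟨e, he⟩
    induction e using Sym2.ind with
    | _ u v =>
      rw [setOf_mem_incident_eq_union X he]
      exact induce_union_connected (hconn u).preconnected (hconn v).preconnected
        (hedge u v he)

end SimpleGraph

theorem stmt_11_general {V ι : Type*} (G : SimpleGraph V) (T : SimpleGraph ι)
    (X : ι → Finset V) (k : ℕ)
    (hdec : IsTreeDecomp G T (fun t => (X t : Set V)))
    (hw : ∀ t, (X t).card ≤ k + 1) :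
    IsTreeDecomp G.lineGraph T
        (fun t => {e : G.edgeSet | ∃ v ∈ X t, v ∈ (e : Sym2 V)}) ∧
      ∀ t, ∀ I : Finset G.edgeSet,
        (∀ e ∈ I, ∃ v ∈ X t, v ∈ (e : Sym2 V)) →
        (∀ e ∈ I, ∀ f ∈ I, ¬ G.lineGraph.Adj e f) →
        I.card ≤ (X t).card ∧ I.card ≤ k + 1 := by
  refine ⟨hdec.lineGraph, fun t I hinc hind => ?_⟩
  have hcard : I.card ≤ (X t).card := card_le_card_of_forall_incident hinc hind
  exact ⟨hcard, hcard.trans (hw t)⟩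

/-- Given a tree decomposition `(T, X)` of `G` of width at most `k`, replacing each bag `X t`
by the set `B t` of edges of `G` incident with a vertex of `X t` yields a tree decomposition of
the line graph `L(G)`, in which every independent set of `L(G)` inside a bag `B t` has size at
most `|X t| ≤ k + 1`. In particular, the tree-independence number of `L(G)` is at most `k + 1`. -/
theorem stmt_11 {V ι : Type*} [DecidableEq V] (G : SimpleGraph V) (T : SimpleGraph ι)
    (X : ι → Finset V) (k : ℕ)
    (hdec : IsTreeDecomp G T (fun t => (X t : Set V)))
    (hw : ∀ t, (X t).card ≤ k + 1) :
    IsTreeDecomp G.lineGraph T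
        (fun t => {e : G.edgeSet | ∃ v ∈ X t, v ∈ (e : Sym2 V)}) ∧
      ∀ t, ∀ I : Finset G.edgeSet,
        (∀ e ∈ I, ∃ v ∈ X t, v ∈ (e : Sym2 V)) →
        (∀ e ∈ I, ∀ f ∈ I, ¬ G.lineGraph.Adj e f) →
        I.card ≤ (X t).card ∧ I.card ≤ k + 1 :=
  stmt_11_general G T X k hdec hw
end

section
/- Let r ≥ 1 be an odd integer, G a graph, and let x₁, x₂, y₁, y₂ be vertices such that in the r-th power G^r: x₁ and x₂ are non-adjacent, y₁ and y₂ are non-adjacent, x_i is adjacent to y_i for i = 1,2, and x_i is non-adjacent to y_j for i ≠ j. Let P₁ be a shortest x₁–y₁ path in G and P₂ a shortest x₂–y₂ path in G (both of length at most r). Then P₁ and P₂ are vertex-disjoint and there is no edge of G between a vertex of P₁ and a vertex of P₂. -/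
/-! Split `P₁` at `a` into pieces of lengths `k, k'` and `P₂` at `b` into pieces of lengths
`l, l'`, and let `d ≤ 1` be the distance from `a` to `b`. Going through the link `ab`, the four
endpoint pairs `x₁x₂, y₁y₂, x₁y₂, x₂y₁` are joined by walks of lengths `k + d + l`,
`k' + d + l'`, `k + d + l'` and `l + d + k'`. If the first two exceed `r`, then `d = 1` and
`k + l = r`; as `r` is odd, `k ≠ l`, and one of the two crossing walks has length at most `r`. -/

/-- The `r`-th power of a graph `G`: two distinct vertices are adjacent iff their distance
in `G` is at most `r` (i.e. iff some walk of length at most `r` joins them). -/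
def SimpleGraph.power {V : Type*} (G : SimpleGraph V) (r : ℕ) : SimpleGraph V where
  Adj u v := u ≠ v ∧ ∃ p : G.Walk u v, p.length ≤ r
  symm := ⟨by
    rintro u v ⟨h, p, hp⟩
    exact ⟨h.symm, p.reverse, by simpa using hp⟩⟩
  loopless := ⟨by rintro u ⟨h, -⟩; exact h rfl⟩

theorem exists_route_le_of_odd {r k k' l l' d : ℕ} (hr : Odd r) (hk : k + k' ≤ r)
    (hl : l + l' ≤ r) (hd : d ≤ 1) :
    k + d + l ≤ r ∨ k' + d + l' ≤ r ∨ k + d + l' ≤ r ∨ l + d + k' ≤ r := by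
  obtain ⟨m, rfl⟩ := hr
  omega

namespace SimpleGraph.Walk

variable {V : Type*} {G : SimpleGraph V} {r : ℕ} {x₁ y₁ x₂ y₂ a b : V}

theorem exists_endpoint_walk_length_le_of_link (hr : Odd r) {p : G.Walk x₁ y₁}
    {q : G.Walk x₂ y₂} (hp : p.length ≤ r) (hq : q.length ≤ r) (ha : a ∈ p.support)
    (hb : b ∈ q.support) (e : G.Walk a b) (he : e.length ≤ 1) :
    (∃ w : G.Walk x₁ x₂, w.length ≤ r) ∨ (∃ w : G.Walk y₁ y₂, w.length ≤ r) ∨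
      (∃ w : G.Walk x₁ y₂, w.length ≤ r) ∨ (∃ w : G.Walk x₂ y₁, w.length ≤ r) := by
  obtain ⟨p₁, p₂, rfl⟩ := mem_support_iff_exists_append.mp ha
  obtain ⟨q₁, q₂, rfl⟩ := mem_support_iff_exists_append.mp hb
  rw [length_append] at hp hq
  rcases exists_route_le_of_odd hr hp hq he with h | h | h | h
  · exact .inl ⟨p₁.append (e.append q₁.reverse), by simpa [add_assoc] using h⟩
  · exact .inr <| .inl ⟨p₂.reverse.append (e.append q₂), by simpa [add_assoc] using h⟩
  · exact .inr <| .inr <| .inl ⟨p₁.append (e.append q₂), by simpa [add_assoc] using h⟩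
  · exact .inr <| .inr <| .inr ⟨q₁.append (e.reverse.append p₂), by simpa [add_assoc] using h⟩

end SimpleGraph.Walk

theorem stmt_13_general {V : Type*} (G : SimpleGraph V) (r : ℕ) (hodd : Odd r)
    (x₁ x₂ y₁ y₂ : V)
    (hxx : x₁ ≠ x₂) (hyy : y₁ ≠ y₂) (hxy12 : x₁ ≠ y₂) (hxy21 : x₂ ≠ y₁)
    (hx : ¬ (G.power r).Adj x₁ x₂) (hy : ¬ (G.power r).Adj y₁ y₂)
    (h12 : ¬ (G.power r).Adj x₁ y₂) (h21 : ¬ (G.power r).Adj x₂ y₁)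
    (P₁ : G.Walk x₁ y₁)
    (hP₁len : P₁.length ≤ r)
    (P₂ : G.Walk x₂ y₂)
    (hP₂len : P₂.length ≤ r) :
    ∀ a ∈ P₁.support, ∀ b ∈ P₂.support, a ≠ b ∧ ¬ G.Adj a b := by
  intro a ha b hb
  have no_short_link (e : G.Walk a b) : 1 < e.length := by
    by_contra! he
    rcases P₁.exists_endpoint_walk_length_le_of_link hodd hP₁len hP₂len ha hb e he with
      ⟨w, hw⟩ | ⟨w, hw⟩ | ⟨w, hw⟩ | ⟨w, hw⟩
    exacts [hx ⟨hxx, w, hw⟩, hy ⟨hyy, w, hw⟩, h12 ⟨hxy12, w, hw⟩, h21 ⟨hxy21, w, hw⟩]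
  refine ⟨?_, fun hadj => by simpa using no_short_link hadj.toWalk⟩
  rintro rfl
  simpa using no_short_link .nil

/-- For odd `r`, if in `G^r` the pairs `x₁x₂`, `y₁y₂`, `x₁y₂`, `x₂y₁` are non-adjacent while
`x₁y₁` and `x₂y₂` are adjacent, then any two shortest paths `P₁` from `x₁` to `y₁` and `P₂`
from `x₂` to `y₂` in `G` (of length at most `r`) are vertex-disjoint and anticomplete. -/
theorem stmt_13 {V : Type*} (G : SimpleGraph V) (r : ℕ) (hodd : Odd r) (hr : 1 ≤ r)
    (x₁ x₂ y₁ y₂ : V)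
    (hxx : x₁ ≠ x₂) (hyy : y₁ ≠ y₂) (hxy12 : x₁ ≠ y₂) (hxy21 : x₂ ≠ y₁)
    (hx : ¬ (G.power r).Adj x₁ x₂) (hy : ¬ (G.power r).Adj y₁ y₂)
    (h11 : (G.power r).Adj x₁ y₁) (h22 : (G.power r).Adj x₂ y₂)
    (h12 : ¬ (G.power r).Adj x₁ y₂) (h21 : ¬ (G.power r).Adj x₂ y₁)
    (P₁ : G.Walk x₁ y₁) (hP₁ : P₁.IsPath) (hP₁min : P₁.length = G.dist x₁ y₁)
    (hP₁len : P₁.length ≤ r)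
    (P₂ : G.Walk x₂ y₂) (hP₂ : P₂.IsPath) (hP₂min : P₂.length = G.dist x₂ y₂)
    (hP₂len : P₂.length ≤ r) :
    ∀ a ∈ P₁.support, ∀ b ∈ P₂.support, a ≠ b ∧ ¬ G.Adj a b :=
  stmt_13_general G r hodd x₁ x₂ y₁ y₂ hxx hyy hxy12 hxy21 hx hy h12 h21 P₁ hP₁len P₂ hP₂len
end

section
/- Let G be a graph, let (A, Ā) be a partition of V(G), and suppose there exist a set D = {d₁,...,dₙ} of vertices and injective-on-indices choices l(dᵢ), r(dᵢ) of vertices such that: l(dᵢ)dᵢ is an edge with l(dᵢ)dᵢ ∈ A-side edges, r(dᵢ)dᵢ is an edge on the Ā-side, and the sets L = {l(dᵢ)}, D, R = {r(dᵢ)} are pairwise disjoint. Then in the line graph L(G), the vertex sets X = {l(dᵢ)dᵢ : i} and Y = {r(dᵢ)dᵢ : i} are independent sets with |X| = |Y| = n and the bipartite graph of L(G) between X and Y is a perfect matching (an induced matching of size n). -/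
open SimpleGraph

/-! Write `e i = s(f i, d i)` and `e' j = s(g j, d j)`. Two edges share an endpoint iff one of
the four endpoint equations holds; disjointness of the images of `f`, `d`, `g` rules out every
mixed equation, so `e i, e' j` meet iff `d i = d j`, i.e. `i = j`, while `e i, e j` (or `e' i, e' j`)
can meet only through `f i = f j` or `d i = d j`, which injectivity forbids. -/

namespace SimpleGraph

variable {V ι : Type*} (G : SimpleGraph V)

theorem lineGraph_adj_mk_iff {a b c e : V} (h₁ : s(a, b) ∈ G.edgeSet) (h₂ : s(c, e) ∈ G.edgeSet) :
    G.lineGraph.Adj ⟨s(a, b), h₁⟩ ⟨s(c, e), h₂⟩ ↔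
      s(a, b) ≠ s(c, e) ∧ (a = c ∨ a = e ∨ b = c ∨ b = e) := by
  rw [lineGraph_adj_iff_exists, ne_eq, Subtype.mk.injEq]
  simp only [Sym2.mem_iff]
  constructor
  · rintro ⟨hne, v, rfl | rfl, rfl | rfl⟩ <;> simp_all
  · rintro ⟨hne, rfl | rfl | rfl | rfl⟩
    exacts [⟨hne, a, by simp⟩, ⟨hne, a, by simp⟩, ⟨hne, b, by simp⟩, ⟨hne, b, by simp⟩]

variable {G} {f g d : ι → V}

theorem injective_sym2_mk_of_injective_right (hd : Function.Injective d)
    (hfd : ∀ i j, f i ≠ d j) : Function.Injective fun i => s(f i, d i) := by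
  intro i j h
  rcases Sym2.eq_iff.1 h with ⟨-, h⟩ | ⟨h, -⟩
  exacts [hd h, absurd h (hfd i j)]

theorem not_lineGraph_adj_of_ne (hf : Function.Injective f) (hd : Function.Injective d)
    (hfd : ∀ i j, f i ≠ d j) (hadj : ∀ i, G.Adj (f i) (d i)) {i j : ι} (hij : i ≠ j) :
    ¬ G.lineGraph.Adj ⟨s(f i, d i), G.mem_edgeSet.2 (hadj i)⟩
      ⟨s(f j, d j), G.mem_edgeSet.2 (hadj j)⟩ := by
  rw [lineGraph_adj_mk_iff]
  rintro ⟨-, h | h | h | h⟩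
  exacts [hij (hf h), hfd i j h, hfd j i h.symm, hij (hd h)]

theorem lineGraph_adj_iff_eq (hd : Function.Injective d) (hfd : ∀ i j, f i ≠ d j)
    (hfg : ∀ i j, f i ≠ g j) (hdg : ∀ i j, d i ≠ g j) (hf : ∀ i, G.Adj (f i) (d i))
    (hg : ∀ i, G.Adj (g i) (d i)) {i j : ι} :
    G.lineGraph.Adj ⟨s(f i, d i), G.mem_edgeSet.2 (hf i)⟩
      ⟨s(g j, d j), G.mem_edgeSet.2 (hg j)⟩ ↔ i = j := by
  rw [lineGraph_adj_mk_iff]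
  constructor
  · rintro ⟨-, h | h | h | h⟩
    exacts [absurd h (hfg i j), absurd h (hfd i j), absurd h (hdg i j), hd h]
  · rintro rfl
    refine ⟨fun h => ?_, Or.inr (Or.inr (Or.inr rfl))⟩
    rcases Sym2.eq_iff.1 h with ⟨h, -⟩ | ⟨h, -⟩
    exacts [hfg i i h, hfd i i h]

end SimpleGraph

/-- A perfect triple `(L, D, R)` of size `n` (given by injective maps `l, d, r : Fin n → V`
with `l i - d i` and `r i - d i` edges of `G` and the images of `l`, `d`, `r` pairwise
disjoint) yields an induced matching of size `n` in the line graph `L(G)` between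
`X = {l i - d i}` and `Y = {r i - d i}`: both families consist of `n` distinct edges, `X` and
`Y` are independent sets of `L(G)`, and `l i - d i` is adjacent to `r j - d j` iff `i = j`. -/
theorem stmt_18 {V : Type*} (G : SimpleGraph V) (n : ℕ) (d l r : Fin n → V)
    (hd : Function.Injective d) (hl : Function.Injective l) (hr : Function.Injective r)
    (hladj : ∀ i, G.Adj (l i) (d i)) (hradj : ∀ i, G.Adj (r i) (d i))
    (hld : ∀ i j, l i ≠ d j) (hlr : ∀ i j, l i ≠ r j) (hdr : ∀ i j, d i ≠ r j) :
    Function.Injective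
        (fun i : Fin n => (⟨s(l i, d i), G.mem_edgeSet.2 (hladj i)⟩ : G.edgeSet)) ∧
    Function.Injective
        (fun i : Fin n => (⟨s(r i, d i), G.mem_edgeSet.2 (hradj i)⟩ : G.edgeSet)) ∧
    (∀ i j : Fin n, i ≠ j →
      ¬ G.lineGraph.Adj ⟨s(l i, d i), G.mem_edgeSet.2 (hladj i)⟩
        ⟨s(l j, d j), G.mem_edgeSet.2 (hladj j)⟩) ∧
    (∀ i j : Fin n, i ≠ j →
      ¬ G.lineGraph.Adj ⟨s(r i, d i), G.mem_edgeSet.2 (hradj i)⟩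
        ⟨s(r j, d j), G.mem_edgeSet.2 (hradj j)⟩) ∧
    (∀ i j : Fin n,
      G.lineGraph.Adj ⟨s(l i, d i), G.mem_edgeSet.2 (hladj i)⟩
        ⟨s(r j, d j), G.mem_edgeSet.2 (hradj j)⟩ ↔ i = j) := by
  have hrd : ∀ i j, r i ≠ d j := fun i j => (hdr j i).symm
  refine ⟨fun i j h => injective_sym2_mk_of_injective_right hd hld (congrArg Subtype.val h),
    fun i j h => injective_sym2_mk_of_injective_right hd hrd (congrArg Subtype.val h),
    fun i j => not_lineGraph_adj_of_ne hl hd hld hladj,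
    fun i j => not_lineGraph_adj_of_ne hr hd hrd hradj,
    fun i j => lineGraph_adj_iff_eq hd hld hlr hdr hladj hradj⟩
end
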